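/- For every integer γ > 1 there exists a PB game with plurality ballots, a tie-breaking order, and an AV/Cost-Nash equilibrium strategy profile c such that the total cost of the projects funded by AV/Cost in the instance (P,V,B,c) is at most B/γ. -/

import Mathlib

open scoped Classical

set_option linter.unusedSectionVars false
set_option linter.unusedVariables false

noncomputable section

namespace PB

variable {P V : Type} [Fintype P] [DecidableEq P] [Fintype V] [DecidableEq V]

/-- The set of voters that approve project `p`. -/
def approvers (A : V → Finset P) (p : P) : Finset V :=
  Finset.univ.filter fun v => p ∈ A v

/-- A key whose second lexicographic component is an embedding into `ℕ` is injective. -/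
lemma lexKey_inj {γ : Type} (g : P → γ) (tb : P ↪ ℕ) :
    Function.Injective fun p : P => toLex ((g p, tb p) : γ × ℕ) := by
  intro a b h
  have h2 : ((g a, tb a) : γ × ℕ) = (g b, tb b) := congrArg (fun x => ofLex x) h
  exact tb.injective (congrArg Prod.snd h2)

/-- The list of all projects, sorted increasingly by an injective key. -/
def prioList {κ : Type} [LinearOrder κ] (key : P → κ) (hk : Function.Injective key) : List P :=
  letI : DecidableRel fun p q : P => key p ≤ key q :=
    fun a b => inferInstanceAs (Decidable (key a ≤ key b))
  letI : IsTrans P fun p q => key p ≤ key q := ⟨fun _ _ _ h1 h2 => le_trans h1 h2⟩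
  letI : Std.Antisymm fun p q : P => key p ≤ key q := ⟨fun _ _ h1 h2 => hk (le_antisymm h1 h2)⟩
  letI : Std.Total fun p q : P => key p ≤ key q := ⟨fun _ _ => le_total _ _⟩
  Finset.sort Finset.univ (fun p q => key p ≤ key q)

/-- Greedy selection of projects along a list: a project is added to the winning set
whenever its cost still fits into the remaining budget. -/
def greedy (cost : P → ℝ) : ℝ → List P → Finset P
  | _, [] => ∅
  | budget, p :: rest =>
      if cost p ≤ budget then insert p (greedy cost (budget - cost p) rest)
      else greedy cost budget rest

/-- The priority key of the BasicAV rule: nonincreasing approval score,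
ties broken by the tie-breaking order `tb` (smaller `tb` value = preferred). -/
def basicAVkey (A : V → Finset P) (tb : P ↪ ℕ) (p : P) : ℕᵒᵈ ×ₗ ℕ :=
  toLex (OrderDual.toDual (approvers A p).card, tb p)

/-- The BasicAV rule. -/
def basicAV (A : V → Finset P) (tb : P ↪ ℕ) (B : ℝ) (cost : P → ℝ) : Finset P :=
  greedy cost B (prioList (basicAVkey A tb) (lexKey_inj _ tb))

/-- The priority key of the AV/Cost rule: nonincreasing approval-to-cost ratio
(computed in `ℝ≥0∞`, so that zero-cost projects come first),
ties broken by the tie-breaking order `tb`. -/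
def avCostKey (A : V → Finset P) (tb : P ↪ ℕ) (cost : P → ℝ) (p : P) : ENNRealᵒᵈ ×ₗ ℕ :=
  toLex (OrderDual.toDual (((approvers A p).card : ENNReal) / ENNReal.ofReal (cost p)), tb p)

/-- The AV/Cost rule. -/
def avCost (A : V → Finset P) (tb : P ↪ ℕ) (B : ℝ) (cost : P → ℝ) : Finset P :=
  greedy cost B (prioList (avCostKey A tb cost) (lexKey_inj _ tb))

/-- The element of a nonempty finite set minimizing an injective key. -/
def argminBy {κ : Type} [LinearOrder κ] (key : P → κ) (hk : Function.Injective key)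
    (R : Finset P) (hR : R.Nonempty) : P :=
  letI : LinearOrder P := LinearOrder.lift' key hk
  R.min' hR

lemma argminBy_mem {κ : Type} [LinearOrder κ] (key : P → κ) (hk : Function.Injective key)
    (R : Finset P) (hR : R.Nonempty) : argminBy key hk R hR ∈ R := by
  letI : LinearOrder P := LinearOrder.lift' key hk
  exact Finset.min'_mem R hR

/-- The time at which the supporters of `p` (jointly earning one unit of money per
unit of time, currently holding the amounts given by `b`) will have collected
`cost p` money, measured from the current moment. -/
def phragTau (A : V → Finset P) (cost : P → ℝ) (b : V → ℝ) (p : P) : ℝ :=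
  (cost p - ∑ v ∈ approvers A p, b v) / ((approvers A p).card : ℝ)

/-- One pass of the Phragmén rule: repeatedly take the remaining project whose
purchase event comes first (ties broken by `tb`); advance all bank accounts to that
moment; if the project fits in the remaining budget it is bought (and its supporters'
accounts are reset), otherwise it is removed from consideration. -/
def phragmenAux (A : V → Finset P) (tb : P ↪ ℕ) (cost : P → ℝ) :
    Finset P → ℝ → (V → ℝ) → Finset P
  | R, budget, b =>
    if hR : R.Nonempty then
      let p := argminBy (fun p => toLex ((phragTau A cost b p, tb p) : ℝ × ℕ))
        (lexKey_inj _ tb) R hR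
      have hp : p ∈ R := argminBy_mem _ _ _ _
      have hcard : (R.erase p).card < R.card := Finset.card_erase_lt_of_mem hp
      if cost p ≤ budget then
        insert p (phragmenAux A tb cost (R.erase p) (budget - cost p)
          (fun v => if v ∈ approvers A p then 0 else b v + phragTau A cost b p))
      else
        phragmenAux A tb cost (R.erase p) budget (fun v => b v + phragTau A cost b p)
    else ∅
  termination_by R _ _ => R.card

/-- The Phragmén rule. -/
def phragmen (A : V → Finset P) (tb : P ↪ ℕ) (B : ℝ) (cost : P → ℝ) : Finset P :=
  phragmenAux A tb cost Finset.univ B (fun _ => 0)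

/-- The set of coefficients `α` for which project `p` is exactly affordable, where
`contrib bv α c` is the amount a voter currently holding `bv` contributes towards a
project of cost `c` under coefficient `α`. -/
def affordSet (A : V → Finset P) (contrib : ℝ → ℝ → ℝ → ℝ) (cost : P → ℝ)
    (b : V → ℝ) (p : P) : Set ℝ :=
  {α : ℝ | ∑ v ∈ approvers A p, contrib (b v) α (cost p) = cost p}

/-- One pass of the Method of Equal Shares, parametrized by the contribution
function `contrib`: repeatedly select, among the remaining affordable projects, the
one with the smallest affordability coefficient (ties broken by `tb`) and charge its
supporters accordingly; stop when no remaining project is affordable. -/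
def mesAux (A : V → Finset P) (tb : P ↪ ℕ) (contrib : ℝ → ℝ → ℝ → ℝ) (cost : P → ℝ) :
    Finset P → (V → ℝ) → Finset P
  | R, b =>
    let F := R.filter fun p => (affordSet A contrib cost b p).Nonempty
    if hF : F.Nonempty then
      let p := argminBy
        (fun p => toLex ((sInf (affordSet A contrib cost b p), tb p) : ℝ × ℕ))
        (lexKey_inj _ tb) F hF
      have hp : p ∈ R := Finset.mem_of_mem_filter p (argminBy_mem _ _ _ _)
      have hcard : (R.erase p).card < R.card := Finset.card_erase_lt_of_mem hp
      insert p (mesAux A tb contrib cost (R.erase p)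
        (fun v => if v ∈ approvers A p then
            b v - contrib (b v) (sInf (affordSet A contrib cost b p)) (cost p)
          else b v))
    else ∅
  termination_by R _ => R.card

/-- The Method of Equal Shares with cost utilities: a voter holding `bv` contributes
`min bv (α * c)` towards a project of cost `c`. -/
def mesCost (A : V → Finset P) (tb : P ↪ ℕ) (B : ℝ) (cost : P → ℝ) : Finset P :=
  mesAux A tb (fun bv α c => min bv (α * c)) cost Finset.univ
    (fun _ => B / (Fintype.card V : ℝ))

/-- The Method of Equal Shares with approval utilities: a voter holding `bv`
contributes `min bv α`. -/
def mesApr (A : V → Finset P) (tb : P ↪ ℕ) (B : ℝ) (cost : P → ℝ) : Finset P :=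
  mesAux A tb (fun bv α _ => min bv α) cost Finset.univ
    (fun _ => B / (Fintype.card V : ℝ))

/-- The payoff of project `p` in the cost game: `cost p - d p` if `p` is funded,
and `0` otherwise. -/
def payoff (d cost : P → ℝ) (W : Finset P) (p : P) : ℝ :=
  if p ∈ W then cost p - d p else 0

/-- `c` is a (pure) Nash equilibrium of the cost game with delivery costs `d` under
the PB rule `rule`: all reported costs are nonnegative and no project can strictly
increase its payoff by unilaterally reporting a different (nonnegative) cost. -/
def isNE (rule : (P → ℝ) → Finset P) (d : P → ℝ) (c : P → ℝ) : Prop :=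
  (∀ p, 0 ≤ c p) ∧
  ∀ (p : P) (x : ℝ), 0 ≤ x →
    payoff d (Function.update c p x) (rule (Function.update c p x)) p ≤
      payoff d c (rule c) p

/-- `tb` is an approval-to-delivery-cost (A/D) tie-breaking order: projects with zero
delivery cost come first, and among projects with positive delivery costs a strictly
larger approval-to-delivery-cost ratio means a strictly better position. -/
def isADOrder (A : V → Finset P) (d : P → ℝ) (tb : P ↪ ℕ) : Prop :=
  (∀ p q : P, d p = 0 → 0 < d q → tb p < tb q) ∧
  (∀ p q : P, 0 < d p → 0 < d q →
    ((approvers A q).card : ℝ) / d q < ((approvers A p).card : ℝ) / d p → tb p < tb q)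

/-- The approval-proportional strategy profile. -/
def apProfile (A : V → Finset P) (B : ℝ) (p : P) : ℝ :=
  B * (approvers A p).card / (∑ q : P, ((approvers A q).card : ℝ))

/-- Plurality preferences: every voter approves exactly one project. -/
def plurality (A : V → Finset P) : Prop := ∀ v, (A v).card = 1

/-- Party-list preferences: any two ballots are equal or disjoint. -/
def partyList (A : V → Finset P) : Prop := ∀ v w, A v = A w ∨ Disjoint (A v) (A w)

/-- The party of a project: all projects approved by exactly the same voters. -/
def party (A : V → Finset P) (p : P) : Finset P :=
  Finset.univ.filter fun q => approvers A q = approvers A p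

end PB

/-!
Take two projects and `γ + 1` voters: voter `0` approves project `0`, reported and delivered at
costs `1` and `0`; the other `γ` voters approve project `1`, reported and delivered at cost
`γ = B`. Both projects have approval-to-cost ratio `1`, the tie goes to project `0`, and then
project `1` no longer fits, so only `1 = B / γ` is spent. Project `0` cannot gain: above cost `1`
it falls behind project `1`, which exhausts the budget. Project `1` cannot gain either: AV/Cost
funds it only at a cost of at most `B`, its delivery cost.
-/

open scoped ENNReal

namespace PB

section Greedy

variable {P : Type} [DecidableEq P]

theorem cost_le_of_mem_greedy {cost : P → ℝ} (hcost : ∀ q, 0 ≤ cost q) {p : P} :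
    ∀ {budget : ℝ} {l : List P}, p ∈ greedy cost budget l → cost p ≤ budget
  | _, [], hp => by simp [greedy] at hp
  | budget, q :: rest, hp => by
    rw [greedy] at hp
    split_ifs at hp with hq
    · rcases Finset.mem_insert.1 hp with rfl | hp
      · exact hq
      · linarith [cost_le_of_mem_greedy hcost hp, hcost q]
    · exact cost_le_of_mem_greedy hcost hp

theorem payoff_greedy_nonpos {d cost : P → ℝ} (hcost : ∀ q, 0 ≤ cost q) {budget : ℝ} {p : P}
    (hd : budget ≤ d p) (l : List P) : payoff d cost (greedy cost budget l) p ≤ 0 := by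
  unfold payoff
  split_ifs with hp
  · linarith [cost_le_of_mem_greedy hcost hp]
  · rfl

end Greedy

theorem prioList_eq_of_pairwise {P κ : Type} [Fintype P] [LinearOrder κ] {key : P → κ}
    (hk : Function.Injective key) {l : List P} (hnd : l.Nodup) (hmem : ∀ p, p ∈ l)
    (hl : l.Pairwise fun p q => key p ≤ key q) : prioList key hk = l := by
  let _ : DecidableRel fun p q : P => key p ≤ key q :=
    fun a b => inferInstanceAs (Decidable (key a ≤ key b))
  let _ : IsTrans P fun p q => key p ≤ key q := ⟨fun _ _ _ h1 h2 => le_trans h1 h2⟩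
  let _ : Std.Antisymm fun p q : P => key p ≤ key q := ⟨fun _ _ h1 h2 => hk (le_antisymm h1 h2)⟩
  let _ : Std.Total fun p q : P => key p ≤ key q := ⟨fun _ _ => le_total _ _⟩
  refine List.Perm.eq_of_pairwise' (Finset.pairwise_sort _ _) hl ?_
  exact (List.perm_ext_iff_of_nodup (Finset.sort_nodup _ _) hnd).2 fun p => by simp [hmem]

theorem prioList_fin_two {κ : Type} [LinearOrder κ] {key : Fin 2 → κ}
    (hk : Function.Injective key) :
    prioList key hk = if key 0 ≤ key 1 then [0, 1] else [1, 0] := by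
  split_ifs with h
  · exact prioList_eq_of_pairwise hk (by decide) (by decide) (by simpa using h)
  · exact prioList_eq_of_pairwise hk (by decide) (by decide) (by simpa using (not_le.1 h).le)

theorem avCostKey_le_iff_of_lt {P V : Type} [DecidableEq P] [Fintype V] {A : V → Finset P}
    {tb : P ↪ ℕ} {cost : P → ℝ} {p q : P} (h : tb p < tb q) :
    avCostKey A tb cost p ≤ avCostKey A tb cost q ↔
      ((approvers A q).card : ℝ≥0∞) / ENNReal.ofReal (cost q) ≤
        ((approvers A p).card : ℝ≥0∞) / ENNReal.ofReal (cost p) := by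
  rw [avCostKey, avCostKey, Prod.Lex.toLex_le_toLex]
  simp only [OrderDual.toDual_lt_toDual, OrderDual.toDual_inj, h.le, and_true]
  rw [le_iff_lt_or_eq, eq_comm]

section TwoParties

variable {k : ℕ}

def twoPartyBallots (k : ℕ) : Fin (k + 1) → Finset (Fin 2) :=
  fun v => if v = 0 then {0} else {1}

theorem card_twoPartyBallots (v : Fin (k + 1)) : (twoPartyBallots k v).card = 1 := by
  unfold twoPartyBallots
  split_ifs <;> rfl

theorem approvers_twoPartyBallots_zero : approvers (twoPartyBallots k) 0 = {0} := by
  ext v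
  rw [approvers, Finset.mem_filter]
  by_cases hv : v = 0 <;> simp [twoPartyBallots, hv]

theorem approvers_twoPartyBallots_one :
    approvers (twoPartyBallots k) 1 = Finset.univ.erase 0 := by
  ext v
  rw [approvers, Finset.mem_filter]
  by_cases hv : v = 0 <;> simp [twoPartyBallots, hv]

theorem approvers_twoPartyBallots_nonempty (hk : 1 ≤ k) (p : Fin 2) :
    (approvers (twoPartyBallots k) p).Nonempty := by
  fin_cases p
  · simp [approvers_twoPartyBallots_zero]
  · refine ⟨Fin.last k, ?_⟩
    simp [approvers_twoPartyBallots_one, Fin.ext_iff]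
    omega

theorem avCost_twoPartyBallots (B : ℝ) (cost : Fin 2 → ℝ) :
    avCost (twoPartyBallots k) Fin.valEmbedding B cost =
      greedy cost B (if (k : ℝ≥0∞) / ENNReal.ofReal (cost 1) ≤ 1 / ENNReal.ofReal (cost 0)
        then [0, 1] else [1, 0]) := by
  rw [avCost]
  erw [prioList_fin_two]
  have h01 : Fin.valEmbedding (0 : Fin 2) < Fin.valEmbedding (1 : Fin 2) := by simp
  simp [avCostKey_le_iff_of_lt h01, approvers_twoPartyBallots_zero,
    approvers_twoPartyBallots_one]

theorem avCost_twoPartyBallots_eq_singleton_zero (hk : 1 ≤ k) :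
    avCost (twoPartyBallots k) Fin.valEmbedding k ![1, k] = {0} := by
  have hk' : (1 : ℝ) ≤ k := by exact_mod_cast hk
  have hratio : (k : ℝ≥0∞) / ENNReal.ofReal k ≤ 1 / ENNReal.ofReal 1 := by
    simp [ENNReal.div_self (Nat.cast_ne_zero.2 (by omega : k ≠ 0))]
  rw [avCost_twoPartyBallots]
  simp only [Matrix.cons_val_zero, Matrix.cons_val_one, Matrix.cons_val_fin_one,
    if_pos hratio]
  norm_num [greedy, hk']

theorem avCost_twoPartyBallots_eq_singleton_one (hk : 1 ≤ k) {x : ℝ} (hx : 1 < x) :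
    avCost (twoPartyBallots k) Fin.valEmbedding k ![x, k] = {1} := by
  have hratio : 1 / ENNReal.ofReal x < (k : ℝ≥0∞) / ENNReal.ofReal k := by
    simp [ENNReal.div_self (Nat.cast_ne_zero.2 (by omega : k ≠ 0)), hx]
  rw [avCost_twoPartyBallots]
  simp only [Matrix.cons_val_zero, Matrix.cons_val_one, Matrix.cons_val_fin_one,
    if_neg hratio.not_ge]
  simp [greedy, (zero_lt_one.trans hx).not_ge]

theorem isNE_twoPartyBallots (hk : 1 ≤ k) :
    isNE (avCost (twoPartyBallots k) Fin.valEmbedding k) ![0, k] ![1, k] := by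
  refine ⟨Fin.forall_fin_two.2 ⟨zero_le_one, k.cast_nonneg⟩,
    Fin.forall_fin_two.2 ⟨fun x hx => ?_, fun x hx => ?_⟩⟩
  · have hupdate : Function.update ![1, (k : ℝ)] 0 x = ![x, k] := by
      ext i; fin_cases i <;> simp
    have hpayoff : payoff ![0, (k : ℝ)] ![1, k] {0} 0 = 1 := by simp [payoff]
    rw [avCost_twoPartyBallots_eq_singleton_zero hk, hupdate, hpayoff]
    rcases le_or_gt x 1 with hx1 | hx1
    · unfold payoff
      split_ifs <;> simp [hx1]
    · simp [avCost_twoPartyBallots_eq_singleton_one hk hx1, payoff]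
  · have hnonneg : ∀ q, 0 ≤ Function.update ![1, (k : ℝ)] 1 x q := by
      simp [Fin.forall_fin_two, hx]
    have hpayoff : payoff ![0, (k : ℝ)] ![1, k] {0} 1 = 0 := by simp [payoff]
    rw [avCost_twoPartyBallots_eq_singleton_zero hk, hpayoff]
    exact payoff_greedy_nonpos hnonneg (by simp) _

end TwoParties

end PB

/-- For every integer `γ > 1` there is a PB game with plurality
ballots, a tie-breaking order and an AV/Cost-Nash equilibrium `c` such that the
total cost of the projects funded by AV/Cost under `c` is at most `B / γ`. -/
theorem avCost_NE_arbitrarily_small_spending (γ : ℕ) (hγ : 1 < γ) :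
    ∃ (m n : ℕ) (A : Fin n → Finset (Fin m)) (tb : Fin m ↪ ℕ) (B : ℝ)
      (d c : Fin m → ℝ),
      0 < B ∧ (∀ v, (A v).card = 1) ∧ (∀ p, (PB.approvers A p).Nonempty) ∧
      (∀ p, 0 ≤ d p) ∧ (∀ p, d p ≤ B) ∧
      PB.isNE (PB.avCost A tb B) d c ∧
      (∑ p ∈ PB.avCost A tb B c, c p) ≤ B / γ := by
  have hγ₁ : 1 ≤ γ := hγ.le
  have hγ₀ : (0 : ℝ) < γ := by exact_mod_cast hγ₁
  refine ⟨2, γ + 1, PB.twoPartyBallots γ, Fin.valEmbedding, γ, ![0, γ], ![1, γ], hγ₀,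
    PB.card_twoPartyBallots, PB.approvers_twoPartyBallots_nonempty hγ₁, ?_, ?_,
    PB.isNE_twoPartyBallots hγ₁, ?_⟩
  iterate 2 simp [Fin.forall_fin_two]
  · simp [PB.avCost_twoPartyBallots_eq_singleton_zero hγ₁, hγ₀.ne']
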